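/- arXiv:math/9905212 — 5 statements merged into one kernel-verified Lean document; each statement's English description precedes it below -/
import Mathlib

section
/- Let n ≥ 1, C₀ ≥ 1 and δ > 0. There exist constants C₁ ≥ 1 and C₁′ ≥ 1, depending only on n, C₀ and δ, with the following property: for every Borel measure μ on ℝⁿ satisfying μ(B) ≤ C₀·diam B for every closed ball B, and for every closed ball B = B(x₀, t₀) with μ(B) ≥ δ·t₀, there exist two closed balls B₁ and B₂ of radius (diam B)/(2C₁), centered at points of B, such that their centers are at distance at least 12·(diam B)/(2C₁) from each other and μ(B ∩ Bᵢ) ≥ (diam B)/(2C₁′) for i = 1, 2. -/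
open MeasureTheory Metric Set
open scoped ENNReal

/-!
Cover `B = B(x₀, t₀)` by boundedly many balls of radius `r = t₀ / C₁` centred in `B`, the bound
coming from a single cover of the unit ball by rescaling. Call a point of `B` heavy if its
`r`-ball carries mass at least `t₀ / C₁'` inside `B`. The light cover balls carry at most
`δ t₀ / 4` in total once `C₁'` is large, so there is a heavy point `y₁`. If every heavy point
were within `12 r` of `y₁`, all heavy cover balls would lie in `B(y₁, 13 r)`, whose mass is at
most `26 C₀ r ≤ δ t₀ / 2` once `C₁` is large; then `μ B ≤ 3 δ t₀ / 4`, a contradiction.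
-/

lemma mul_div_max_one_div_le {a b t : ℝ} (hb : 0 < b) (ht : 0 ≤ t) :
    a * (t / max 1 (a / b)) ≤ b * t := by
  have hpos : 0 < max 1 (a / b) := one_pos.trans_le (le_max_left _ _)
  rw [mul_div_assoc', div_le_iff₀ hpos]
  nlinarith [(div_le_iff₀' hb).1 (le_max_right 1 (a / b)), le_max_left 1 (a / b)]

lemma exists_card_le_cover_closedBall (E : Type*) [NormedAddCommGroup E] [NormedSpace ℝ E]
    [ProperSpace E] {ε : ℝ} (hε : 0 < ε) :
    ∃ N : ℕ, ∀ (x : E) {t : ℝ}, 0 < t → ∃ s : Finset E, s.card ≤ N ∧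
      ↑s ⊆ closedBall x t ∧ closedBall x t ⊆ ⋃ z ∈ s, closedBall z (ε * t) := by
  classical
  obtain ⟨s₀, hs₀, hfin, hcover⟩ := (isCompact_closedBall (0 : E) 1).finite_cover_balls hε
  refine ⟨hfin.toFinset.card, fun x t ht => ?_⟩
  set f : E → E := fun z => x + t • z
  have hf : ∀ a b, dist (f a) (f b) = t * dist a b := fun a b => by
    rw [dist_add_left, dist_smul₀, Real.norm_of_nonneg ht.le]
  have hf0 : f 0 = x := by simp [f]
  refine ⟨hfin.toFinset.image f, Finset.card_image_le, ?_, ?_⟩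
  · intro y hy
    obtain ⟨z, hz, rfl⟩ := Finset.mem_image.1 hy
    rw [mem_closedBall, ← hf0, hf]
    exact mul_le_of_le_one_right ht.le (hs₀ (hfin.mem_toFinset.1 hz))
  · intro y hy
    set w : E := t⁻¹ • (y - x)
    have hfw : f w = y := by simp [f, w, smul_smul, mul_inv_cancel₀ ht.ne']
    have hw : w ∈ closedBall (0 : E) 1 := by
      rw [mem_closedBall, ← mul_le_mul_iff_of_pos_left ht, ← hf, hfw, hf0, mul_one]
      exact hy
    obtain ⟨z, hz, hwz⟩ := mem_iUnion₂.1 (hcover hw)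
    refine mem_iUnion₂.2 ⟨f z, Finset.mem_image_of_mem f (hfin.mem_toFinset.2 hz), ?_⟩
    rw [mem_closedBall, ← hfw, hf, mul_comm ε]
    exact mul_le_mul_of_nonneg_left (mem_ball.1 hwz).le ht.le

section Cover

variable {X : Type*} [PseudoMetricSpace X] [MeasurableSpace X] (μ : Measure X)

lemma measure_le_add_card_mul_of_cover {A B : Set X} {s : Finset X} {r : ℝ} {m : ℝ≥0∞}
    (hcover : B ⊆ ⋃ z ∈ s, closedBall z r)
    (hheavy : ∀ z ∈ s, m ≤ μ (B ∩ closedBall z r) → B ∩ closedBall z r ⊆ A) :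
    μ B ≤ μ A + s.card * m := by
  have hdiff : B \ A ⊆ ⋃ z ∈ s, (B ∩ closedBall z r) \ A := fun y ⟨hyB, hyA⟩ => by
    obtain ⟨z, hz, hyz⟩ := mem_iUnion₂.1 (hcover hyB)
    exact mem_iUnion₂.2 ⟨z, hz, ⟨hyB, hyz⟩, hyA⟩
  have hterm : ∀ z ∈ s, μ ((B ∩ closedBall z r) \ A) ≤ m := fun z hz => by
    by_cases hm : m ≤ μ (B ∩ closedBall z r)
    · simp [sdiff_eq_empty.2 (hheavy z hz hm)]
    · exact (measure_mono sdiff_subset).trans (not_le.1 hm).le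
  calc μ B ≤ μ (B ∩ A) + μ (B \ A) := measure_le_inter_add_sdiff μ B A
    _ ≤ μ A + ∑ z ∈ s, μ ((B ∩ closedBall z r) \ A) :=
          add_le_add (measure_mono inter_subset_right)
            ((measure_mono hdiff).trans (measure_biUnion_finset_le _ _))
    _ ≤ μ A + s.card * m := by
          gcongr
          simpa only [nsmul_eq_mul] using Finset.sum_le_card_nsmul _ _ _ hterm

lemma exists_separated_heavy_of_cover {B : Set X} {s : Finset X} {r K : ℝ} {m M : ℝ≥0∞}
    (hsB : ↑s ⊆ B) (hcover : B ⊆ ⋃ z ∈ s, closedBall z r)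
    (hball : ∀ y, μ (closedBall y (K * r + r)) ≤ M) (hmass : M + s.card * m < μ B) :
    ∃ y₁ ∈ B, ∃ y₂ ∈ B, K * r ≤ dist y₁ y₂ ∧
      m ≤ μ (B ∩ closedBall y₁ r) ∧ m ≤ μ (B ∩ closedBall y₂ r) := by
  by_contra! hno
  refine hmass.not_ge ?_
  by_cases hS : ∃ y₁ ∈ B, m ≤ μ (B ∩ closedBall y₁ r)
  · obtain ⟨y₁, hy₁B, hy₁⟩ := hS
    refine (measure_le_add_card_mul_of_cover μ hcover fun z hz hzm => ?_).trans
      (by gcongr; exact hball y₁)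
    have hnear : dist y₁ z < K * r := by
      by_contra! hfar
      exact (hno y₁ hy₁B z (hsB hz) hfar hy₁).not_ge hzm
    intro y ⟨_, hyz⟩
    rw [mem_closedBall] at hyz ⊢
    linarith [dist_triangle y z y₁, dist_comm z y₁]
  · push Not at hS
    refine (measure_le_add_card_mul_of_cover μ (A := ∅) hcover fun z hz hzm =>
      absurd hzm (hS z (hsB hz)).not_ge).trans ?_
    simp

end Cover

theorem exists_separated_heavy_closedBalls {E : Type*} [NormedAddCommGroup E] [NormedSpace ℝ E]
    [ProperSpace E] [MeasurableSpace E] {K : ℝ} (hK : 0 ≤ K) (C₀ : ℝ) {δ : ℝ} (hδ : 0 < δ) :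
    ∃ C₁ C₁' : ℝ, 1 ≤ C₁ ∧ 1 ≤ C₁' ∧ ∀ μ : Measure E,
      (∀ (x : E) (r : ℝ), 0 ≤ r → μ (closedBall x r) ≤ ENNReal.ofReal (C₀ * (2 * r))) →
      ∀ (x₀ : E) (t₀ : ℝ), 0 < t₀ → ENNReal.ofReal (δ * t₀) ≤ μ (closedBall x₀ t₀) →
        ∃ y₁ ∈ closedBall x₀ t₀, ∃ y₂ ∈ closedBall x₀ t₀, K * (t₀ / C₁) ≤ dist y₁ y₂ ∧
          ENNReal.ofReal (t₀ / C₁') ≤ μ (closedBall x₀ t₀ ∩ closedBall y₁ (t₀ / C₁)) ∧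
          ENNReal.ofReal (t₀ / C₁') ≤ μ (closedBall x₀ t₀ ∩ closedBall y₂ (t₀ / C₁)) := by
  set C₁ := max 1 (4 * (K + 1) * C₀ / δ)
  have hC₁ : 0 < C₁ := one_pos.trans_le (le_max_left _ _)
  obtain ⟨N, hN⟩ := exists_card_le_cover_closedBall E (inv_pos.2 hC₁)
  set C₁' := max 1 (4 * N / δ)
  refine ⟨C₁, C₁', le_max_left _ _, le_max_left _ _, fun μ hμ x₀ t₀ ht₀ hden => ?_⟩
  obtain ⟨s, hcard, hsB, hcover⟩ := hN x₀ ht₀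
  rw [inv_mul_eq_div] at hcover
  have hr : 0 ≤ K * (t₀ / C₁) + t₀ / C₁ := by positivity
  refine exists_separated_heavy_of_cover μ hsB hcover (fun y => hμ y _ hr) ?_
  have hbig : C₀ * (2 * (K * (t₀ / C₁) + t₀ / C₁)) ≤ δ * t₀ / 2 := by
    have := mul_div_max_one_div_le (a := 4 * (K + 1) * C₀) hδ ht₀.le
    linarith
  have hlight : (s.card : ℝ) * (t₀ / C₁') ≤ δ * t₀ / 4 := by
    have := mul_div_max_one_div_le (a := 4 * N) hδ ht₀.le
    calc (s.card : ℝ) * (t₀ / C₁') ≤ N * (t₀ / C₁') := by gcongr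
      _ ≤ δ * t₀ / 4 := by linarith
  calc ENNReal.ofReal (C₀ * (2 * (K * (t₀ / C₁) + t₀ / C₁))) + s.card * ENNReal.ofReal (t₀ / C₁')
      = ENNReal.ofReal (C₀ * (2 * (K * (t₀ / C₁) + t₀ / C₁))) +
          ENNReal.ofReal (s.card * (t₀ / C₁')) := by
        rw [ENNReal.ofReal_mul (Nat.cast_nonneg _), ENNReal.ofReal_natCast]
    _ ≤ ENNReal.ofReal (δ * t₀ / 2) + ENNReal.ofReal (δ * t₀ / 4) :=
        add_le_add (ENNReal.ofReal_le_ofReal hbig) (ENNReal.ofReal_le_ofReal hlight)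
    _ = ENNReal.ofReal (3 / 4 * (δ * t₀)) := by
        rw [← ENNReal.ofReal_add (by positivity) (by positivity)]; ring_nf
    _ < ENNReal.ofReal (δ * t₀) := by
        rw [ENNReal.ofReal_lt_ofReal_iff (by positivity)]; linarith [mul_pos hδ ht₀]
    _ ≤ μ (closedBall x₀ t₀) := hden

theorem statement5_general (n : ℕ) (C₀ δ : ℝ) (hδ : 0 < δ) :
    ∃ C₁ C₁' : ℝ, 1 ≤ C₁ ∧ 1 ≤ C₁' ∧
      ∀ μ : Measure (EuclideanSpace ℝ (Fin n)),
        (∀ (x : EuclideanSpace ℝ (Fin n)) (r : ℝ),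
          μ (Metric.closedBall x r) ≤
            ENNReal.ofReal (C₀ * Metric.diam (Metric.closedBall x r))) →
        ∀ (x₀ : EuclideanSpace ℝ (Fin n)) (t₀ : ℝ), 0 < t₀ →
          ENNReal.ofReal (δ * t₀) ≤ μ (Metric.closedBall x₀ t₀) →
          ∃ y₁ y₂ : EuclideanSpace ℝ (Fin n),
            y₁ ∈ Metric.closedBall x₀ t₀ ∧ y₂ ∈ Metric.closedBall x₀ t₀ ∧
            12 * (Metric.diam (Metric.closedBall x₀ t₀) / (2 * C₁)) ≤ dist y₁ y₂ ∧
            ENNReal.ofReal (Metric.diam (Metric.closedBall x₀ t₀) / (2 * C₁')) ≤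
              μ (Metric.closedBall x₀ t₀ ∩
                Metric.closedBall y₁ (Metric.diam (Metric.closedBall x₀ t₀) / (2 * C₁))) ∧
            ENNReal.ofReal (Metric.diam (Metric.closedBall x₀ t₀) / (2 * C₁')) ≤
              μ (Metric.closedBall x₀ t₀ ∩
                Metric.closedBall y₂ (Metric.diam (Metric.closedBall x₀ t₀) / (2 * C₁))) := by
  rcases subsingleton_or_nontrivial (EuclideanSpace ℝ (Fin n)) with hE | hE
  · refine ⟨1, 1, le_rfl, le_rfl, fun μ _ x₀ t₀ ht₀ _ => ⟨x₀, x₀, ?_⟩⟩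
    simp [diam_subsingleton (subsingleton_of_subsingleton (s := closedBall x₀ t₀)), ht₀.le]
  obtain ⟨C₁, C₁', hC₁, hC₁', hballs⟩ :=
    exists_separated_heavy_closedBalls (E := EuclideanSpace ℝ (Fin n)) (K := 12) (by norm_num) C₀ hδ
  refine ⟨C₁, C₁', hC₁, hC₁', fun μ hμ x₀ t₀ ht₀ hden => ?_⟩
  have hdiam (C : ℝ) : diam (closedBall x₀ t₀) / (2 * C) = t₀ / C := by
    rw [diam_closedBall_eq x₀ ht₀.le, mul_div_mul_left _ _ two_ne_zero]
  obtain ⟨y₁, hy₁, y₂, hy₂, hsep, hmass₁, hmass₂⟩ := hballs μ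
    (fun x r hr => diam_closedBall_eq x hr ▸ hμ x r) x₀ t₀ ht₀ hden
  simp only [hdiam]
  exact ⟨y₁, y₂, hy₁, hy₂, hsep, hmass₁, hmass₂⟩

/-- Lemma 2.3: for a measure with linear growth (constant `C₀`) and a ball `B = B(x₀,t₀)` of
density at least `δ`, there are two balls of radius `diam B / (2C₁)` centered at points of `B`,
whose centers are at least `12 · diam B / (2C₁)` apart, each carrying mass at least
`diam B / (2C₁')` inside `B`; `C₁, C₁'` depend only on `n`, `C₀` and `δ`. -/
theorem statement5 (n : ℕ) (hn : 1 ≤ n) (C₀ δ : ℝ) (hC₀ : 1 ≤ C₀) (hδ : 0 < δ) :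
    ∃ C₁ C₁' : ℝ, 1 ≤ C₁ ∧ 1 ≤ C₁' ∧
      ∀ μ : Measure (EuclideanSpace ℝ (Fin n)),
        (∀ (x : EuclideanSpace ℝ (Fin n)) (r : ℝ),
          μ (Metric.closedBall x r) ≤
            ENNReal.ofReal (C₀ * Metric.diam (Metric.closedBall x r))) →
        ∀ (x₀ : EuclideanSpace ℝ (Fin n)) (t₀ : ℝ), 0 < t₀ →
          ENNReal.ofReal (δ * t₀) ≤ μ (Metric.closedBall x₀ t₀) →
          ∃ y₁ y₂ : EuclideanSpace ℝ (Fin n),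
            y₁ ∈ Metric.closedBall x₀ t₀ ∧ y₂ ∈ Metric.closedBall x₀ t₀ ∧
            12 * (Metric.diam (Metric.closedBall x₀ t₀) / (2 * C₁)) ≤ dist y₁ y₂ ∧
            ENNReal.ofReal (Metric.diam (Metric.closedBall x₀ t₀) / (2 * C₁')) ≤
              μ (Metric.closedBall x₀ t₀ ∩
                Metric.closedBall y₁ (Metric.diam (Metric.closedBall x₀ t₀) / (2 * C₁))) ∧
            ENNReal.ofReal (Metric.diam (Metric.closedBall x₀ t₀) / (2 * C₁')) ≤
              μ (Metric.closedBall x₀ t₀ ∩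
                Metric.closedBall y₂ (Metric.diam (Metric.closedBall x₀ t₀) / (2 * C₁))) :=
  statement5_general n C₀ δ hδ
end

section
/- Let n ≥ 1, C₀ ≥ 1, k ≥ 2 and δ > 0. There exist ε₀ > 0 and C > 1, depending only on n, C₀, k and δ, with the following property. Let μ be a compactly supported Borel measure on ℝⁿ with μ(B) ≤ C₀·diam B for every closed ball B, and let F be the support of μ. Suppose x ∈ F, t > 0, 0 < ε < ε₀, μ(B(x,t)) ≥ δ·t, μ(B(y,t)) ≥ δ·t, and dist(x,y) ≤ (k/2)·t. If D₁ and D₂ are lines in ℝⁿ satisfying (1/t) ∫_{B(x,kt)} (dist(z,D₁)/t) dμ(z) ≤ 10⁴·ε and (1/t) ∫_{B(y,kt)} (dist(z,D₂)/t) dμ(z) ≤ 10⁴·ε, then: (i) for all w ∈ D₁, dist(w, D₂) ≤ C·ε·(t + dist(w,x)), and for all w ∈ D₂, dist(w, D₁) ≤ C·ε·(t + dist(w,x)); (ii) the angle between the directions of D₁ and D₂ is at most C·ε. -/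
open MeasureTheory Metric Set
open scoped ENNReal NNReal

/-- Menger curvature of a triple of points: the reciprocal of the circumradius,
equal to `2 · dist(x, L_{y,z}) / (dist(x,y) · dist(x,z))`, with the convention that
it is `0` for collinear (in particular non pairwise distinct) triples. -/
noncomputable def mengerCurvature {E : Type*} [NormedAddCommGroup E] [InnerProductSpace ℝ E]
    (x y z : E) : ℝ :=
  letI := Classical.propDecidable
  if Collinear ℝ ({x, y, z} : Set E) then 0
  else 2 * Metric.infDist x (affineSpan ℝ ({y, z} : Set E) : Set E) / (dist x y * dist x z)

/-- The total Menger curvature `c²(A) = ∭_{A³} c(x,y,z)² dH¹dH¹dH¹`. -/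
noncomputable def totalMengerCurvSq {E : Type*} [NormedAddCommGroup E] [InnerProductSpace ℝ E]
    [MeasurableSpace E] [BorelSpace E] (A : Set E) : ℝ≥0∞ :=
  ∫⁻ x in A, ∫⁻ y in A, ∫⁻ z in A, ENNReal.ofReal (mengerCurvature x y z ^ 2)
    ∂(Measure.hausdorffMeasure 1) ∂(Measure.hausdorffMeasure 1) ∂(Measure.hausdorffMeasure 1)


/-- A line of `E`: a nonempty affine subspace whose direction has dimension `1`. -/
def IsLine {E : Type*} [NormedAddCommGroup E] [InnerProductSpace ℝ E]
    (D : AffineSubspace ℝ E) : Prop :=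
  (D : Set E).Nonempty ∧ Module.finrank ℝ D.direction = 1

/-- The (topological) support of a measure: points all of whose closed balls of positive
radius have positive measure. -/
def measSupport {E : Type*} [NormedAddCommGroup E] [InnerProductSpace ℝ E]
    [MeasurableSpace E] (μ : Measure E) : Set E :=
  {x | ∀ r : ℝ, 0 < r → 0 < μ (Metric.closedBall x r)}

/-!
By Chebyshev's inequality, the points of `B(x, t)` at distance `≥ θ t` (with `θ ≍ ε / δ`) from
`D₁` or from `D₂` carry measure at most `δ t / 4`, while every ball of radius `τ = δ t / (8 C₀)`
carries measure at most `δ t / 4` by the growth bound. Since `μ (B(x, t)) ≥ δ t`, there are two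
points `z₁, z₂ ∈ B(x, t)` at distance `> τ` from each other, each `θ t`-close to both lines.
Nearby points `p₁, p₂ ∈ D₁` and `q₁, q₂ ∈ D₂` then satisfy `|pᵢ - qᵢ| ≤ 2 θ t` and
`|p₁ - p₂|, |q₁ - q₂| ≥ τ / 2`; comparing `lineMap p₁ p₂ s` with `lineMap q₁ q₂ s` bounds the
distance between the lines, and comparing `p₂ - p₁` with `q₂ - q₁` bounds their angle, both by
`O(θ t / τ) = O(ε)`.
-/

open AffineMap Real
open scoped RealInnerProductSpace

theorem dist_lineMap_lineMap_le {V : Type*} [NormedAddCommGroup V] [NormedSpace ℝ V]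
    (p₁ p₂ q₁ q₂ : V) (c : ℝ) :
    dist (lineMap p₁ p₂ c) (lineMap q₁ q₂ c) ≤ |1 - c| * dist p₁ q₁ + |c| * dist p₂ q₂ := by
  rw [dist_eq_norm_vsub, lineMap_vsub_lineMap, lineMap_apply_module, dist_eq_norm_vsub,
    dist_eq_norm_vsub]
  refine (norm_add_le _ _).trans_eq ?_
  simp only [norm_smul, Real.norm_eq_abs, vsub_eq_sub]

theorem Real.arccos_le_of_one_sub_sq_div_eight_le {x z : ℝ} (hx : 0 ≤ x) (hz : 0 ≤ z)
    (h : 1 - z ^ 2 / 8 ≤ x) : arccos x ≤ z := by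
  rcases le_total (π / 2) z with hπz | hzπ
  · exact (arccos_le_pi_div_two.2 hx).trans hπz
  have hcos : cos z ≤ x := by
    have hπ : 2 / π ^ 2 ≥ 1 / 8 := by
      rw [ge_iff_le, div_le_div_iff₀ (by norm_num) (by positivity)]
      nlinarith [pi_lt_four, pi_pos]
    have := cos_le_one_sub_mul_cos_sq (x := z) (by rw [abs_of_nonneg hz]; linarith [pi_pos])
    nlinarith [sq_nonneg z]
  calc arccos x ≤ arccos (cos z) := arccos_le_arccos hcos
    _ = z := arccos_cos hz (by linarith [pi_pos])

section Lines

variable {E : Type*} [NormedAddCommGroup E] [InnerProductSpace ℝ E]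
  {D D' : AffineSubspace ℝ E} {p₁ p₂ q₁ q₂ : E}

theorem IsLine.exists_smul_eq (hD : IsLine D) (hp₁ : p₁ ∈ D) (hp₂ : p₂ ∈ D) (hp : p₁ ≠ p₂)
    {v : E} (hv : v ∈ D.direction) : ∃ c : ℝ, c • (p₂ -ᵥ p₁) = v := by
  have hne : (⟨p₂ -ᵥ p₁, D.vsub_mem_direction hp₂ hp₁⟩ : D.direction) ≠ 0 := by
    simpa [Subtype.ext_iff, sub_eq_zero] using hp.symm
  obtain ⟨c, hc⟩ := (finrank_eq_one_iff_of_nonzero' _ hne).1 hD.2 ⟨v, hv⟩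
  exact ⟨c, congrArg Subtype.val hc⟩

theorem IsLine.exists_lineMap_eq (hD : IsLine D) (hp₁ : p₁ ∈ D) (hp₂ : p₂ ∈ D) (hp : p₁ ≠ p₂)
    {w : E} (hw : w ∈ D) : ∃ c : ℝ, lineMap p₁ p₂ c = w := by
  obtain ⟨c, hc⟩ := hD.exists_smul_eq hp₁ hp₂ hp (D.vsub_mem_direction hw hp₁)
  exact ⟨c, by rw [lineMap_apply, hc, vsub_vadd]⟩

theorem IsLine.infDist_le_of_dist_le (hD : IsLine D) (hp₁ : p₁ ∈ D) (hp₂ : p₂ ∈ D)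
    (hq₁ : q₁ ∈ D') (hq₂ : q₂ ∈ D') {a b : ℝ} (hb : 0 < b) (hbp : b ≤ dist p₁ p₂)
    (h₁ : dist p₁ q₁ ≤ a) (h₂ : dist p₂ q₂ ≤ a) {w : E} (hw : w ∈ D) :
    infDist w D' ≤ a + 2 * a * dist w p₁ / b := by
  obtain ⟨c, rfl⟩ := hD.exists_lineMap_eq hp₁ hp₂ (dist_pos.1 (hb.trans_le hbp)) hw
  have hc : |c| ≤ dist (lineMap p₁ p₂ c) p₁ / b := by
    rw [le_div_iff₀ hb, dist_lineMap_left, Real.norm_eq_abs]; gcongr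
  have ha : 0 ≤ a := dist_nonneg.trans h₁
  calc infDist (lineMap p₁ p₂ c) D' ≤ dist (lineMap p₁ p₂ c) (lineMap q₁ q₂ c) :=
        infDist_le_dist_of_mem (lineMap_mem c hq₁ hq₂)
    _ ≤ |1 - c| * a + |c| * a :=
        (dist_lineMap_lineMap_le _ _ _ _ _).trans (by gcongr)
    _ ≤ (1 + 2 * |c|) * a := by
        have := abs_sub (1 : ℝ) c; rw [abs_one] at this; nlinarith
    _ ≤ a + 2 * a * dist (lineMap p₁ p₂ c) p₁ / b := by
        rw [mul_div_assoc]; nlinarith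

theorem one_sub_sq_div_le_real_inner_div_norm_mul_norm {v₁ v₂ : E} {b e : ℝ} (hb : 0 < b)
    (h₁ : b ≤ ‖v₁‖) (h₂ : b ≤ ‖v₂‖) (he : ‖v₁ - v₂‖ ≤ e) :
    1 - e ^ 2 / (2 * b ^ 2) ≤ ⟪v₁, v₂⟫ / (‖v₁‖ * ‖v₂‖) := by
  have hbb : b ^ 2 ≤ ‖v₁‖ * ‖v₂‖ := by rw [sq]; gcongr
  have hsq : ‖v₁ - v₂‖ ^ 2 ≤ e ^ 2 := pow_le_pow_left₀ (norm_nonneg _) he 2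
  rw [norm_sub_sq_real] at hsq
  have hinner : ‖v₁‖ * ‖v₂‖ - e ^ 2 / 2 ≤ ⟪v₁, v₂⟫ := by
    nlinarith [sq_nonneg (‖v₁‖ - ‖v₂‖)]
  rw [le_div_iff₀ ((pow_pos hb 2).trans_le hbb)]
  calc (1 - e ^ 2 / (2 * b ^ 2)) * (‖v₁‖ * ‖v₂‖)
      = ‖v₁‖ * ‖v₂‖ - e ^ 2 / 2 * ((‖v₁‖ * ‖v₂‖) / b ^ 2) := by field_simp
    _ ≤ ‖v₁‖ * ‖v₂‖ - e ^ 2 / 2 := by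
        gcongr
        exact le_mul_of_one_le_right (by positivity) ((one_le_div (by positivity)).2 hbb)
    _ ≤ ⟪v₁, v₂⟫ := hinner

theorem real_inner_div_norm_mul_norm_le_abs_real_inner_smul {v₁ v₂ : E} {c₁ c₂ : ℝ}
    (h₁ : ‖c₁ • v₁‖ = 1) (h₂ : ‖c₂ • v₂‖ = 1) :
    ⟪v₁, v₂⟫ / (‖v₁‖ * ‖v₂‖) ≤ |⟪c₁ • v₁, c₂ • v₂⟫| := by
  rw [norm_smul, Real.norm_eq_abs] at h₁ h₂
  rw [real_inner_smul_left, real_inner_smul_right, abs_mul, abs_mul,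
    div_eq_mul_inv, mul_inv, inv_eq_of_mul_eq_one_left h₁, inv_eq_of_mul_eq_one_left h₂]
  have := mul_le_mul_of_nonneg_right (le_abs_self ⟪v₁, v₂⟫)
    (mul_nonneg (abs_nonneg c₁) (abs_nonneg c₂))
  linarith

theorem IsLine.arccos_abs_inner_le (hD : IsLine D) (hD' : IsLine D') (hp₁ : p₁ ∈ D)
    (hp₂ : p₂ ∈ D) (hq₁ : q₁ ∈ D') (hq₂ : q₂ ∈ D') {a b : ℝ} (hb : 0 < b)
    (hbp : b ≤ dist p₁ p₂) (hbq : b ≤ dist q₁ q₂) (h₁ : dist p₁ q₁ ≤ a) (h₂ : dist p₂ q₂ ≤ a)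
    {u v : E} (hu : u ∈ D.direction) (hv : v ∈ D'.direction) (hu₁ : ‖u‖ = 1) (hv₁ : ‖v‖ = 1) :
    arccos |⟪u, v⟫| ≤ 4 * a / b := by
  obtain ⟨c₁, rfl⟩ := hD.exists_smul_eq hp₁ hp₂ (dist_pos.1 (hb.trans_le hbp)) hu
  obtain ⟨c₂, rfl⟩ := hD'.exists_smul_eq hq₁ hq₂ (dist_pos.1 (hb.trans_le hbq)) hv
  have ha : 0 ≤ a := dist_nonneg.trans h₁
  rw [dist_eq_norm'] at hbp hbq h₁ h₂
  have he : ‖(p₂ -ᵥ p₁) - (q₂ -ᵥ q₁)‖ ≤ 2 * a := by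
    rw [vsub_eq_sub, vsub_eq_sub, show p₂ - p₁ - (q₂ - q₁) = (q₁ - p₁) - (q₂ - p₂) by abel]
    linarith [norm_sub_le (q₁ - p₁) (q₂ - p₂)]
  refine arccos_le_of_one_sub_sq_div_eight_le (abs_nonneg _) (by positivity) ?_
  calc 1 - (4 * a / b) ^ 2 / 8 = 1 - (2 * a) ^ 2 / (2 * b ^ 2) := by field_simp; ring
    _ ≤ ⟪p₂ -ᵥ p₁, q₂ -ᵥ q₁⟫ / (‖p₂ -ᵥ p₁‖ * ‖q₂ -ᵥ q₁‖) :=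
        one_sub_sq_div_le_real_inner_div_norm_mul_norm hb hbp hbq he
    _ ≤ _ := real_inner_div_norm_mul_norm_le_abs_real_inner_smul hu₁ hv₁

theorem IsLine.close_of_near_points {D₁ D₂ : AffineSubspace ℝ E} (hD₁ : IsLine D₁)
    (hD₂ : IsLine D₂) {z₁ z₂ : E} {η τ : ℝ} (hη : 0 < η) (hητ : 4 * η ≤ τ)
    (hz : τ < dist z₁ z₂) (h₁₁ : infDist z₁ D₁ < η) (h₂₁ : infDist z₂ D₁ < η)
    (h₁₂ : infDist z₁ D₂ < η) (h₂₂ : infDist z₂ D₂ < η) :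
    (∀ w ∈ D₁, infDist w D₂ ≤ 4 * η + 8 * η / τ * dist w z₁) ∧
    (∀ w ∈ D₂, infDist w D₁ ≤ 4 * η + 8 * η / τ * dist w z₁) ∧
    (∀ u v : E, u ∈ D₁.direction → v ∈ D₂.direction → ‖u‖ = 1 → ‖v‖ = 1 →
      arccos |⟪u, v⟫| ≤ 16 * η / τ) := by
  obtain ⟨p₁, hp₁, hzp₁⟩ := (infDist_lt_iff hD₁.1).1 h₁₁
  obtain ⟨p₂, hp₂, hzp₂⟩ := (infDist_lt_iff hD₁.1).1 h₂₁
  obtain ⟨q₁, hq₁, hzq₁⟩ := (infDist_lt_iff hD₂.1).1 h₁₂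
  obtain ⟨q₂, hq₂, hzq₂⟩ := (infDist_lt_iff hD₂.1).1 h₂₂
  have hpq₁ : dist p₁ q₁ ≤ 2 * η := by linarith [dist_triangle_left p₁ q₁ z₁]
  have hpq₂ : dist p₂ q₂ ≤ 2 * η := by linarith [dist_triangle_left p₂ q₂ z₂]
  have hp : τ / 2 ≤ dist p₁ p₂ := by linarith [dist_triangle4 z₁ p₁ p₂ z₂, dist_comm p₂ z₂]
  have hq : τ / 2 ≤ dist q₁ q₂ := by linarith [dist_triangle4 z₁ q₁ q₂ z₂, dist_comm q₂ z₂]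
  have hτ : 0 < τ / 2 := by linarith
  -- `dist w p₁` and `dist w q₁` exceed `dist w z₁` by at most `η`, and `8 η / τ * η ≤ 2 η`
  have hscale : ∀ m d : ℝ, m ≤ d + η →
      2 * η + 2 * (2 * η) * m / (τ / 2) ≤ 4 * η + 8 * η / τ * d := by
    intro m d hm
    have hratio : 8 * η / τ ≤ 2 := by rw [div_le_iff₀ (by linarith)]; linarith
    have hm' := mul_le_mul_of_nonneg_left hm
      (div_nonneg (by positivity) (by linarith) : 0 ≤ 8 * η / τ)
    calc 2 * η + 2 * (2 * η) * m / (τ / 2) = 2 * η + 8 * η / τ * m := by field_simp; ring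
      _ ≤ 4 * η + 8 * η / τ * d := by nlinarith
  refine ⟨fun w hw => ?_, fun w hw => ?_, fun u v hu hv hu₁ hv₁ => ?_⟩
  · exact (hD₁.infDist_le_of_dist_le hp₁ hp₂ hq₁ hq₂ hτ hp hpq₁ hpq₂ hw).trans
      (hscale _ _ (by linarith [dist_triangle w z₁ p₁]))
  · exact (hD₂.infDist_le_of_dist_le hq₁ hq₂ hp₁ hp₂ hτ hq (by rwa [dist_comm])
      (by rwa [dist_comm]) hw).trans
      (hscale _ _ (by linarith [dist_triangle w z₁ q₁]))
  · exact (hD₁.arccos_abs_inner_le hD₂ hp₁ hp₂ hq₁ hq₂ hτ hp hq hpq₁ hpq₂ hu hv hu₁ hv₁).trans_eq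
      (by field_simp; ring)

end Lines

theorem measure_setOf_le_inter_le_ofReal_integral_div {α : Type*} [MeasurableSpace α]
    {μ : Measure α} {s : Set α} {f : α → ℝ} (hf : IntegrableOn f s μ) (hf₀ : 0 ≤ f) {c : ℝ}
    (hc : 0 < c) : μ ({z | c ≤ f z} ∩ s) ≤ ENNReal.ofReal ((∫ z in s, f z ∂μ) / c) := by
  rw [ENNReal.ofReal_div_of_pos hc, ofReal_integral_eq_lintegral_ofReal hf (ae_of_all _ hf₀)]
  calc μ ({z | c ≤ f z} ∩ s) ≤ μ.restrict s {z | ENNReal.ofReal c ≤ ENNReal.ofReal (f z)} :=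
        (measure_mono (inter_subset_inter_left s fun z (hz : c ≤ f z) =>
          ENNReal.ofReal_le_ofReal hz)).trans (Measure.le_restrict_apply _ _)
    _ ≤ _ := meas_ge_le_lintegral_div hf.aemeasurable.ennreal_ofReal
        (ENNReal.ofReal_pos.2 hc).ne' ENNReal.ofReal_ne_top

section Density

variable {X : Type*} [PseudoMetricSpace X] [MeasurableSpace X] {μ : Measure X}

theorem exists_lt_dist_of_measure_add_lt {s A : Set X} {τ : ℝ} {m : ℝ≥0∞}
    (hball : ∀ c, μ (closedBall c τ) ≤ m) (hlt : μ A + m < μ s) :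
    ∃ z₁ ∈ s \ A, ∃ z₂ ∈ s \ A, τ < dist z₁ z₂ := by
  have hcover : ∀ B, μ B ≤ m → ¬ s ⊆ A ∪ B := fun B hB hsub =>
    ((measure_mono hsub).trans ((measure_union_le A B).trans (add_le_add le_rfl hB))).not_gt hlt
  obtain ⟨z₁, hz₁⟩ := sdiff_nonempty.2 (by simpa using hcover ∅ (by simp))
  obtain ⟨z₂, hz₂s, hz₂⟩ := sdiff_nonempty.2 (hcover _ (hball z₁))
  rw [mem_union, not_or, mem_closedBall, not_le] at hz₂
  exact ⟨z₁, hz₁, z₂, ⟨hz₂s, hz₂.1⟩, hz₂.2.trans_eq (dist_comm _ _)⟩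

variable [OpensMeasurableSpace X]

theorem measure_le_infDist_inter_closedBall_le {D : Set X} {c : X} {R t θ β : ℝ}
    (hR : μ (closedBall c R) ≠ ∞) (ht : 0 < t) (hθ : 0 < θ)
    (hβ : 1 / t * ∫ z in closedBall c R, infDist z D / t ∂μ ≤ β) :
    μ ({z | θ * t ≤ infDist z D} ∩ closedBall c R) ≤ ENNReal.ofReal (β * t / θ) := by
  have hint : IntegrableOn (fun z => infDist z D / t) (closedBall c R) μ := by
    refine Measure.integrableOn_of_bounded hR
      ((continuous_infDist_pt D).div_const t).aestronglyMeasurable (M := (infDist c D + R) / t)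
      (ae_restrict_of_forall_mem measurableSet_closedBall fun z hz => ?_)
    rw [Real.norm_of_nonneg (div_nonneg infDist_nonneg ht.le)]
    gcongr
    linarith [infDist_le_infDist_add_dist (x := z) (y := c) (s := D), mem_closedBall.1 hz]
  rw [one_div_mul_eq_div, div_le_iff₀ ht] at hβ
  calc μ ({z | θ * t ≤ infDist z D} ∩ closedBall c R)
      = μ ({z | θ ≤ infDist z D / t} ∩ closedBall c R) := by simp_rw [le_div_iff₀ ht]
    _ ≤ ENNReal.ofReal ((∫ z in closedBall c R, infDist z D / t ∂μ) / θ) :=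
        measure_setOf_le_inter_le_ofReal_integral_div hint
          (fun z => div_nonneg infDist_nonneg ht.le) hθ
    _ ≤ ENNReal.ofReal (β * t / θ) := by gcongr

theorem exists_far_pair_near_of_integral_infDist_le {D₁ D₂ : Set X} {x y : X}
    {C₀ δ k t θ β : ℝ} (hC₀ : 0 < C₀) (hδ : 0 < δ) (hk : 2 ≤ k) (ht : 0 < t) (hθ : 0 < θ)
    (hβθ : β ≤ θ * δ / 8)
    (hgrowth : ∀ (c : X) (r : ℝ),
      μ (closedBall c r) ≤ ENNReal.ofReal (C₀ * diam (closedBall c r)))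
    (hx : ENNReal.ofReal (δ * t) ≤ μ (closedBall x t)) (hxy : dist x y ≤ k / 2 * t)
    (hβ₁ : 1 / t * ∫ z in closedBall x (k * t), infDist z D₁ / t ∂μ ≤ β)
    (hβ₂ : 1 / t * ∫ z in closedBall y (k * t), infDist z D₂ / t ∂μ ≤ β) :
    ∃ z₁ ∈ closedBall x t, ∃ z₂, δ * t / (8 * C₀) < dist z₁ z₂ ∧
      infDist z₁ D₁ < θ * t ∧ infDist z₂ D₁ < θ * t ∧
      infDist z₁ D₂ < θ * t ∧ infDist z₂ D₂ < θ * t := by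
  set bad := ({z | θ * t ≤ infDist z D₁} ∩ closedBall x (k * t)) ∪
    ({z | θ * t ≤ infDist z D₂} ∩ closedBall y (k * t))
  have hfin : ∀ c r, μ (closedBall c r) ≠ ∞ := fun c r =>
    ne_top_of_le_ne_top ENNReal.ofReal_ne_top (hgrowth c r)
  have hβt : ENNReal.ofReal (β * t / θ) ≤ ENNReal.ofReal (δ * t / 8) := by
    refine ENNReal.ofReal_le_ofReal ((div_le_iff₀ hθ).2 ?_)
    nlinarith
  have hbad : μ bad ≤ ENNReal.ofReal (δ * t / 4) := by
    calc μ bad ≤ ENNReal.ofReal (δ * t / 8) + ENNReal.ofReal (δ * t / 8) :=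
          (measure_union_le _ _).trans (add_le_add
            ((measure_le_infDist_inter_closedBall_le (hfin _ _) ht hθ hβ₁).trans hβt)
            ((measure_le_infDist_inter_closedBall_le (hfin _ _) ht hθ hβ₂).trans hβt))
      _ = ENNReal.ofReal (δ * t / 4) := by
          rw [← ENNReal.ofReal_add (by positivity) (by positivity)]; ring_nf
  have hball : ∀ c, μ (closedBall c (δ * t / (8 * C₀))) ≤ ENNReal.ofReal (δ * t / 4) := by
    intro c
    refine (hgrowth c _).trans (ENNReal.ofReal_le_ofReal ?_)
    calc C₀ * diam (closedBall c (δ * t / (8 * C₀))) ≤ C₀ * (2 * (δ * t / (8 * C₀))) := by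
          gcongr; exact diam_closedBall (by positivity)
      _ = δ * t / 4 := by field_simp; ring
  have hlt : μ bad + ENNReal.ofReal (δ * t / 4) < μ (closedBall x t) := by
    refine (add_le_add hbad le_rfl).trans_lt (lt_of_lt_of_le ?_ hx)
    rw [← ENNReal.ofReal_add (by positivity) (by positivity),
      ENNReal.ofReal_lt_ofReal_iff (by positivity)]
    linarith [mul_pos hδ ht]
  obtain ⟨z₁, ⟨hz₁, hz₁bad⟩, z₂, ⟨hz₂, hz₂bad⟩, hfar⟩ :=
    exists_lt_dist_of_measure_add_lt hball hlt
  have hgood : ∀ z ∈ closedBall x t, z ∉ bad →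
      infDist z D₁ < θ * t ∧ infDist z D₂ < θ * t := by
    intro z hz hzbad
    simp only [bad, mem_union, mem_inter_iff, mem_ofPred_eq, not_or, not_and', not_le] at hzbad
    rw [mem_closedBall] at hz
    refine ⟨hzbad.1 ?_, hzbad.2 ?_⟩ <;> rw [mem_closedBall]
    · nlinarith
    · nlinarith [dist_triangle z x y]
  exact ⟨z₁, hz₁, z₂, hfar, (hgood z₁ hz₁ hz₁bad).1, (hgood z₂ hz₂ hz₂bad).1,
    (hgood z₁ hz₁ hz₁bad).2, (hgood z₂ hz₂ hz₂bad).2⟩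

end Density

theorem statement8_general (n : ℕ) (C₀ k δ : ℝ)
    (hC₀ : 1 ≤ C₀) (hk : 2 ≤ k) (hδ : 0 < δ) :
    ∃ ε₀ C : ℝ, 0 < ε₀ ∧ 1 < C ∧
      ∀ μ : Measure (EuclideanSpace ℝ (Fin n)),
        (∃ K : Set (EuclideanSpace ℝ (Fin n)), IsCompact K ∧ μ Kᶜ = 0) →
        (∀ (x : EuclideanSpace ℝ (Fin n)) (r : ℝ),
          μ (Metric.closedBall x r) ≤
            ENNReal.ofReal (C₀ * Metric.diam (Metric.closedBall x r))) →
        ∀ (x y : EuclideanSpace ℝ (Fin n)) (t ε : ℝ),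
          x ∈ measSupport μ → 0 < t → 0 < ε → ε < ε₀ →
          ENNReal.ofReal (δ * t) ≤ μ (Metric.closedBall x t) →
          ENNReal.ofReal (δ * t) ≤ μ (Metric.closedBall y t) →
          dist x y ≤ (k / 2) * t →
          ∀ D₁ D₂ : AffineSubspace ℝ (EuclideanSpace ℝ (Fin n)),
            IsLine D₁ → IsLine D₂ →
            (1 / t) * (∫ z in Metric.closedBall x (k * t),
                Metric.infDist z (D₁ : Set (EuclideanSpace ℝ (Fin n))) / t ∂μ) ≤ 10 ^ 4 * ε →
            (1 / t) * (∫ z in Metric.closedBall y (k * t),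
                Metric.infDist z (D₂ : Set (EuclideanSpace ℝ (Fin n))) / t ∂μ) ≤ 10 ^ 4 * ε →
            (∀ w ∈ (D₁ : Set (EuclideanSpace ℝ (Fin n))),
              Metric.infDist w (D₂ : Set (EuclideanSpace ℝ (Fin n))) ≤ C * ε * (t + dist w x)) ∧
            (∀ w ∈ (D₂ : Set (EuclideanSpace ℝ (Fin n))),
              Metric.infDist w (D₁ : Set (EuclideanSpace ℝ (Fin n))) ≤ C * ε * (t + dist w x)) ∧
            (∀ u v : EuclideanSpace ℝ (Fin n),
              u ∈ D₁.direction → v ∈ D₂.direction → ‖u‖ = 1 → ‖v‖ = 1 →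
              Real.arccos |(inner ℝ u v : ℝ)| ≤ C * ε) := by
  set C : ℝ := 8 * 10 ^ 4 / δ * (4 + 128 * C₀ / δ) + 1 with hC
  refine ⟨δ ^ 2 / (10 ^ 7 * C₀), C, by positivity, lt_add_of_pos_left _ (by positivity), ?_⟩
  intro μ _ hgrowth x y t ε _ ht hε hεε₀ hx _ hxy D₁ D₂ hD₁ hD₂ hβ₁ hβ₂
  have hC₀' : 0 < C₀ := by linarith
  -- `θ` makes the Chebyshev bound `10⁴ ε t / θ` equal to `δ t / 8`
  set θ := 8 * 10 ^ 4 * ε / δ with hθ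
  set τ := δ * t / (8 * C₀) with hτ
  have hθ₀ : 0 < θ := by positivity
  obtain ⟨z₁, hz₁, z₂, hfar, h₁₁, h₂₁, h₁₂, h₂₂⟩ :=
    exists_far_pair_near_of_integral_infDist_le (θ := θ) hC₀' hδ hk ht hθ₀
      (le_of_eq (by rw [hθ]; field_simp)) hgrowth hx hxy hβ₁ hβ₂
  have hητ : 4 * (θ * t) ≤ τ := by
    rw [lt_div_iff₀ (by positivity)] at hεε₀
    rw [hθ, hτ, div_mul_eq_mul_div, mul_div_assoc', div_le_div_iff₀ hδ (by positivity)]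
    nlinarith [mul_pos ht hδ]
  obtain ⟨hw₁, hw₂, hangle⟩ :=
    hD₁.close_of_near_points hD₂ (by positivity) hητ hfar h₁₁ h₂₁ h₁₂ h₂₂
  have hCε : 4 * θ + 16 * (θ * t) / τ ≤ C * ε := by
    rw [hθ, hτ, hC]; field_simp; nlinarith
  have hdist : ∀ w, 4 * (θ * t) + 8 * (θ * t) / τ * dist w z₁ ≤ C * ε * (t + dist w x) := by
    intro w
    have hz : dist w z₁ ≤ dist w x + t := (dist_triangle w x z₁).trans
      (add_le_add le_rfl (mem_closedBall'.1 hz₁))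
    have hratio : 0 ≤ 8 * (θ * t) / τ := by positivity
    calc 4 * (θ * t) + 8 * (θ * t) / τ * dist w z₁
        ≤ 4 * (θ * t) + 8 * (θ * t) / τ * (dist w x + t) := by gcongr
      _ ≤ (4 * θ + 16 * (θ * t) / τ) * (t + dist w x) := by
        rw [show 16 * (θ * t) / τ = 2 * (8 * (θ * t) / τ) by ring]
        nlinarith [mul_nonneg hratio (by positivity : 0 ≤ t + dist w x),
          mul_nonneg hθ₀.le (dist_nonneg : 0 ≤ dist w x)]
      _ ≤ _ := by gcongr
  exact ⟨fun w hw => (hw₁ w hw).trans (hdist w), fun w hw => (hw₂ w hw).trans (hdist w),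
    fun u v hu hv hu₁ hv₁ => (hangle u v hu hv hu₁ hv₁).trans (by linarith)⟩

/-- Lemma 2.6: two lines nearly realizing small `β₁`-type bounds at nearby points of
controlled density are close to each other, both in distance (at scale `t + dist(w,x)`)
and in angle. -/
theorem statement8 (n : ℕ) (hn : 1 ≤ n) (C₀ k δ : ℝ)
    (hC₀ : 1 ≤ C₀) (hk : 2 ≤ k) (hδ : 0 < δ) :
    ∃ ε₀ C : ℝ, 0 < ε₀ ∧ 1 < C ∧
      ∀ μ : Measure (EuclideanSpace ℝ (Fin n)),
        (∃ K : Set (EuclideanSpace ℝ (Fin n)), IsCompact K ∧ μ Kᶜ = 0) →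
        (∀ (x : EuclideanSpace ℝ (Fin n)) (r : ℝ),
          μ (Metric.closedBall x r) ≤
            ENNReal.ofReal (C₀ * Metric.diam (Metric.closedBall x r))) →
        ∀ (x y : EuclideanSpace ℝ (Fin n)) (t ε : ℝ),
          x ∈ measSupport μ → 0 < t → 0 < ε → ε < ε₀ →
          ENNReal.ofReal (δ * t) ≤ μ (Metric.closedBall x t) →
          ENNReal.ofReal (δ * t) ≤ μ (Metric.closedBall y t) →
          dist x y ≤ (k / 2) * t →
          ∀ D₁ D₂ : AffineSubspace ℝ (EuclideanSpace ℝ (Fin n)),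
            IsLine D₁ → IsLine D₂ →
            (1 / t) * (∫ z in Metric.closedBall x (k * t),
                Metric.infDist z (D₁ : Set (EuclideanSpace ℝ (Fin n))) / t ∂μ) ≤ 10 ^ 4 * ε →
            (1 / t) * (∫ z in Metric.closedBall y (k * t),
                Metric.infDist z (D₂ : Set (EuclideanSpace ℝ (Fin n))) / t ∂μ) ≤ 10 ^ 4 * ε →
            (∀ w ∈ (D₁ : Set (EuclideanSpace ℝ (Fin n))),
              Metric.infDist w (D₂ : Set (EuclideanSpace ℝ (Fin n))) ≤ C * ε * (t + dist w x)) ∧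
            (∀ w ∈ (D₂ : Set (EuclideanSpace ℝ (Fin n))),
              Metric.infDist w (D₁ : Set (EuclideanSpace ℝ (Fin n))) ≤ C * ε * (t + dist w x)) ∧
            (∀ u v : EuclideanSpace ℝ (Fin n),
              u ∈ D₁.direction → v ∈ D₂.direction → ‖u‖ = 1 → ‖v‖ = 1 →
              Real.arccos |(inner ℝ u v : ℝ)| ≤ C * ε) :=
  statement8_general n C₀ k δ hC₀ hk hδ
end

section
/- For any three pairwise distinct complex numbers z₁, z₂, z₃, the Menger curvature satisfies c(z₁,z₂,z₃)² = Σ_{σ ∈ S₃} 1/( (z_{σ(1)} − z_{σ(3)}) · conj(z_{σ(2)} − z_{σ(3)}) ), where the sum ranges over the group S₃ of permutations of three elements and conj denotes complex conjugation; in particular the right-hand side is a nonnegative real number. -/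
open MeasureTheory Metric Set
open scoped ENNReal NNReal

/-!
Put `a = z₁ - z₃` and `b = z₂ - z₃`. The distance from `z₁` to the line through `z₂, z₃` is
`|Im (a b̄)| / |b|`, so `c² = 4 (Im a b̄)² / (|a|² |b|² |a - b|²)`. Since `4 (Im a b̄)² = -(a b̄ - ā b)²`
and `|w|² = w w̄`, treating `z₁, z₂, z₃` and their conjugates as independent variables turns both
sides into rational functions, and the identity between them holds over any field.
-/

open Equiv Complex ComplexConjugate

theorem Fin.sum_univ_perm_three {M : Type*} [AddCommMonoid M] (g : Fin 3 → Fin 3 → Fin 3 → M) :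
    ∑ σ : Perm (Fin 3), g (σ 0) (σ 1) (σ 2) =
      g 0 1 2 + g 0 2 1 + g 1 0 2 + g 1 2 0 + g 2 0 1 + g 2 1 0 := by
  have huniv : (Finset.univ : Finset (Perm (Fin 3))) =
      {1, swap 1 2, swap 0 1, finRotate 3, (finRotate 3)⁻¹, swap 0 2} := by decide
  rw [huniv, Finset.sum_insert (by decide), Finset.sum_insert (by decide),
    Finset.sum_insert (by decide), Finset.sum_insert (by decide), Finset.sum_insert (by decide),
    Finset.sum_singleton]
  simp only [add_assoc]
  rfl

theorem melnikov_identity {K : Type*} [Field K] {x y z p q r : K}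
    (hxy : x ≠ y) (hxz : x ≠ z) (hyz : y ≠ z) (hpq : p ≠ q) (hpr : p ≠ r) (hqr : q ≠ r) :
    1 / ((x - z) * (q - r)) + 1 / ((x - y) * (r - q)) + 1 / ((y - z) * (p - r)) +
      1 / ((y - x) * (r - p)) + 1 / ((z - y) * (p - q)) + 1 / ((z - x) * (q - p)) =
    -((x - z) * (q - r) - (p - r) * (y - z)) ^ 2 /
      ((x - y) * (p - q) * ((x - z) * (p - r)) * ((y - z) * (q - r))) := by
  have := sub_ne_zero.2 hxy; have := sub_ne_zero.2 hxz; have := sub_ne_zero.2 hyz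
  have := sub_ne_zero.2 hpq; have := sub_ne_zero.2 hpr; have := sub_ne_zero.2 hqr
  field_simp
  ring

theorem mengerCurvature_eq_of_ne {E : Type*} [NormedAddCommGroup E] [InnerProductSpace ℝ E]
    (x : E) {y z : E} (hyz : y ≠ z) :
    mengerCurvature x y z = 2 * infDist x line[ℝ, y, z] / (dist x y * dist x z) := by
  unfold mengerCurvature
  split_ifs with hcol
  · have hx : x ∈ line[ℝ, y, z] :=
      hcol.mem_affineSpan_of_mem_of_ne (by simp) (by simp) (by simp) hyz
    rw [infDist_zero_of_mem hx, mul_zero, zero_div]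
  · rfl

namespace Complex

theorem sub_lineMap_mul_conj (x y z : ℂ) (t : ℝ) :
    (x - AffineMap.lineMap z y t) * conj (y - z) =
      (x - z) * conj (y - z) - t * normSq (y - z) := by
  rw [AffineMap.lineMap_apply_module', ← mul_conj, real_smul]
  ring

theorem infDist_affineSpan_pair (x : ℂ) {y z : ℂ} (hyz : y ≠ z) :
    infDist x line[ℝ, y, z] = |((x - z) * conj (y - z)).im| / ‖y - z‖ := by
  have hb : 0 < ‖y - z‖ := norm_pos_iff.2 (sub_ne_zero.2 hyz)
  have him (t : ℝ) :
      ((x - AffineMap.lineMap z y t) * conj (y - z)).im = ((x - z) * conj (y - z)).im := by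
    rw [sub_lineMap_mul_conj]
    simp
  have hnorm (t : ℝ) : dist x (AffineMap.lineMap z y t) * ‖y - z‖ =
      ‖(x - AffineMap.lineMap z y t) * conj (y - z)‖ := by
    rw [norm_mul, norm_conj, dist_eq]
  refine le_antisymm ?_ ((le_infDist ⟨y, left_mem_affineSpan_pair ℝ y z⟩).2 fun p hp => ?_)
  · -- `t₀` is the parameter of the foot of the perpendicular from `x`
    set t₀ : ℝ := ((x - z) * conj (y - z)).re / normSq (y - z)
    have hre : ((x - AffineMap.lineMap z y t₀) * conj (y - z)).re = 0 := by
      have : normSq (y - z) ≠ 0 := (normSq_pos.2 (sub_ne_zero.2 hyz)).ne'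
      rw [sub_lineMap_mul_conj]
      simp [t₀, this]
    refine (infDist_le_dist_of_mem
      (mem_affineSpan_pair_iff_exists_lineMap_rev_eq.2 ⟨t₀, rfl⟩)).trans_eq ?_
    rw [← mul_div_cancel_right₀ (dist _ _) hb.ne', hnorm, ← abs_im_eq_norm.2 hre, him]
  · obtain ⟨t, rfl⟩ := mem_affineSpan_pair_iff_exists_lineMap_rev_eq.1 hp
    rw [div_le_iff₀ hb, hnorm, ← him t]
    exact abs_im_le_norm _

theorem mengerCurvature_sq (x : ℂ) {y z : ℂ} (hyz : y ≠ z) :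
    mengerCurvature x y z ^ 2 = (2 * ((x - z) * conj (y - z)).im) ^ 2 /
      (normSq (x - y) * normSq (x - z) * normSq (y - z)) := by
  rw [mengerCurvature_eq_of_ne x hyz, infDist_affineSpan_pair x hyz, dist_eq, dist_eq]
  simp only [div_pow, mul_pow, sq_abs, Complex.sq_norm]
  ring

theorem two_mul_im_sq (w : ℂ) : (2 * (w.im : ℂ)) ^ 2 = -(w - conj w) ^ 2 := by
  rw [sub_conj]
  push_cast
  linear_combination (2 * (w.im : ℂ)) ^ 2 * I_sq

end Complex

/-- The Melnikov identity: for pairwise distinct complex numbers,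
`c(z₁,z₂,z₃)² = Σ_{σ ∈ S₃} 1/((z_{σ(1)} − z_{σ(3)}) · conj(z_{σ(2)} − z_{σ(3)}))`;
in particular the right-hand side is a nonnegative real number (it equals the coercion of
the nonnegative real `c(z₁,z₂,z₃)²`). -/
theorem statement9 (z₁ z₂ z₃ : ℂ) (h12 : z₁ ≠ z₂) (h13 : z₁ ≠ z₃) (h23 : z₂ ≠ z₃) :
    (∑ σ : Equiv.Perm (Fin 3),
        1 / ((![z₁, z₂, z₃] (σ 0) - ![z₁, z₂, z₃] (σ 2)) *
          (starRingEnd ℂ) (![z₁, z₂, z₃] (σ 1) - ![z₁, z₂, z₃] (σ 2)))) =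
      ((mengerCurvature z₁ z₂ z₃ ^ 2 : ℝ) : ℂ) := by
  have hconj {u v : ℂ} (h : u ≠ v) : conj u ≠ conj v := (starRingEnd ℂ).injective.ne h
  rw [Fin.sum_univ_perm_three fun i j k => 1 / ((![z₁, z₂, z₃] i - ![z₁, z₂, z₃] k) *
      conj (![z₁, z₂, z₃] j - ![z₁, z₂, z₃] k)), Complex.mengerCurvature_sq z₁ h23]
  simp only [Matrix.cons_val, map_sub]
  rw [melnikov_identity h12 h13 h23 (hconj h12) (hconj h13) (hconj h23)]
  push_cast
  rw [← mul_conj, ← mul_conj, ← mul_conj, Complex.two_mul_im_sq]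
  simp only [map_sub, map_mul, conj_conj]
end

section
/- There exists an absolute constant C such that for every Lipschitz function f : ℝ → ℝ, ∫_ℝ N(f)(p)² dp ≤ C ∫_ℝ |f′(p)|² dp, where f′ is the (almost everywhere defined) derivative of f and N(f)(p) = sup_B (1/|B|) ∫_B |f(u) − m_B f| du / |B|, the supremum being taken over all closed intervals B of length |B| ≤ 4 containing p, and m_B f = (1/|B|) ∫_B f denoting the mean of f over B. -/
open MeasureTheory Metric Set
open scoped ENNReal NNReal

/-- The mean value `m_{[a,b]} f = (1/(b-a)) ∫_a^b f`. -/
noncomputable def meanOn (f : ℝ → ℝ) (a b : ℝ) : ℝ :=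
  (1 / (b - a)) * ∫ u in Set.Icc a b, f u

/-- The maximal function
`N(f)(p) = sup_B (1/|B|) ∫_B |f − m_B f| / |B|`, the supremum over all closed intervals `B`
of length at most `4` containing `p`. -/
noncomputable def maxFnN (f : ℝ → ℝ) (p : ℝ) : ℝ :=
  ⨆ B : {q : ℝ × ℝ // q.1 ≤ q.2 ∧ q.2 - q.1 ≤ 4 ∧ p ∈ Set.Icc q.1 q.2},
    (1 / (B.1.2 - B.1.1)) *
      (∫ u in Set.Icc B.1.1 B.1.2, |f u - meanOn f B.1.1 B.1.2|) / (B.1.2 - B.1.1)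

/-!
For `B = [a, b]` and `u, v ∈ B` the fundamental theorem of calculus for the Lipschitz
(hence absolutely continuous) `f` gives `|f u - f v| ≤ ∫_B |f'|`, so the mean oscillation of `f`
on `B` is at most `∫_B |f'|` and `N(f)` is bounded by twice the uncentred Hardy–Littlewood
maximal function `M` of `|f'|`. The maximal function is of weak type `(1, 1)` by the Vitali
covering lemma; truncating `|f'|` at height `t / 2` gives `t · |{M > t}| ≤ 8 ∫_{2|f'| > t} |f'|`,
and integrating against `2t dt` (layer cake and Tonelli) yields `∫ M² ≤ 32 ∫ |f'|²`.
-/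

theorem mul_volume_biUnion_ball_le {g : ℝ → ℝ≥0∞} {c : ℝ≥0∞} {R : ℝ} {S : Set (ℝ × ℝ)}
    (hR : ∀ q ∈ S, q.2 ≤ R)
    (hS : ∀ q ∈ S, c * volume (ball q.1 q.2) < ∫⁻ y in ball q.1 q.2, g y) :
    c * volume (⋃ q ∈ S, ball q.1 q.2) ≤ 4 * ∫⁻ y, g y := by
  have hpos : ∀ q ∈ S, 0 < q.2 := fun q hq => by
    by_contra! hr
    simpa [(ball_eq_empty (x := q.1)).2 hr] using hS q hq
  obtain ⟨u, huS, hdisj, hcover⟩ :=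
    Vitali.exists_disjoint_subfamily_covering_enlargement_closedBall S Prod.fst Prod.snd R hR 4
      (by norm_num)
  have hu : u.Countable := hdisj.countable_of_nonempty_interior fun q hq =>
    ⟨q.1, mem_interior_iff_mem_nhds.2 (closedBall_mem_nhds _ (hpos q (huS hq)))⟩
  calc c * volume (⋃ q ∈ S, ball q.1 q.2)
      ≤ c * volume (⋃ q ∈ u, closedBall q.1 (4 * q.2)) := by
        gcongr c * volume ?_
        refine iUnion₂_subset fun q hq => ?_
        obtain ⟨q', hq', hqq'⟩ := hcover q hq
        exact ball_subset_closedBall.trans <| hqq'.trans <|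
          subset_biUnion_of_mem (u := fun q : ℝ × ℝ => closedBall q.1 (4 * q.2)) hq'
    _ ≤ c * ∑' q : u, volume (closedBall q.1.1 (4 * q.1.2)) := by
        gcongr
        exact measure_biUnion_le _ hu _
    _ = 4 * ∑' q : u, c * volume (ball q.1.1 q.1.2) := by
        rw [← ENNReal.tsum_mul_left, ← ENNReal.tsum_mul_left]
        congr 1 with q
        rw [Real.volume_closedBall, Real.volume_ball,
          show 2 * (4 * q.1.2) = 4 * (2 * q.1.2) by ring, ENNReal.ofReal_mul (by norm_num),
          ENNReal.ofReal_ofNat]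
        ring
    _ ≤ 4 * ∑' q : u, ∫⁻ y in ball q.1.1 q.1.2, g y := by
        gcongr with q
        exact (hS q (huS q.2)).le
    _ = 4 * ∫⁻ y in ⋃ q ∈ u, ball q.1 q.2, g y := by
        rw [lintegral_biUnion hu (fun _ _ => measurableSet_ball)
          (hdisj.mono fun _ => ball_subset_closedBall)]
    _ ≤ 4 * ∫⁻ y, g y := by
        gcongr
        exact Measure.restrict_le_self

theorem volume_Ioi_inter_setOf_ofReal_lt (b : ℝ≥0∞) :
    volume (Ioi (0 : ℝ) ∩ {t | ENNReal.ofReal t < b}) = b := by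
  rcases eq_or_ne b ∞ with rfl | hb
  · simp
  have hset : Ioi (0 : ℝ) ∩ {t | ENNReal.ofReal t < b} = Ioo 0 b.toReal := by
    ext t
    simp only [mem_inter_iff, mem_Ioi, mem_Ioo, and_congr_right_iff]
    exact fun ht => ENNReal.ofReal_lt_iff_lt_toReal ht.le hb
  rw [hset, Real.volume_Ioo, sub_zero, ENNReal.ofReal_toReal hb]

theorem lintegral_Ioi_setLIntegral_ofReal_lt {α : Type*} [MeasurableSpace α] {μ : Measure α}
    [SFinite μ] {g h : α → ℝ≥0∞} (hg : Measurable g) (hh : Measurable h) :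
    ∫⁻ t in Ioi 0, ∫⁻ y in {y | ENNReal.ofReal t < g y}, h y ∂μ = ∫⁻ y, g y * h y ∂μ := by
  have hm : Measurable (Function.uncurry fun t => {y | ENNReal.ofReal t < g y}.indicator h) :=
    (hh.comp measurable_snd).indicator
      (measurableSet_lt measurable_fst.ennreal_ofReal (hg.comp measurable_snd))
  have hslice (y : α) :
      ∫⁻ t in Ioi 0, {y | ENNReal.ofReal t < g y}.indicator h y = g y * h y := by
    have hmeas : MeasurableSet {t : ℝ | ENNReal.ofReal t < g y} :=
      measurableSet_lt measurable_id.ennreal_ofReal measurable_const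
    calc ∫⁻ t in Ioi 0, {y | ENNReal.ofReal t < g y}.indicator h y
        = ∫⁻ t in Ioi 0, {t : ℝ | ENNReal.ofReal t < g y}.indicator (fun _ => h y) t := rfl
      _ = g y * h y := by
          rw [lintegral_indicator hmeas, Measure.restrict_restrict hmeas, setLIntegral_const,
            inter_comm, volume_Ioi_inter_setOf_ofReal_lt, mul_comm]
  simp_rw [← lintegral_indicator (measurableSet_lt measurable_const hg)]
  rw [lintegral_lintegral_swap hm.aemeasurable]
  exact lintegral_congr hslice

/-- Balls are open, so the superlevel sets of this maximal function are open. -/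
noncomputable def uncenteredMaximal (g : ℝ → ℝ≥0∞) (p : ℝ) : ℝ≥0∞ :=
  ⨆ (x : ℝ) (r : ℝ) (_ : p ∈ ball x r), ⨍⁻ y in ball x r, g y ∂volume

namespace uncenteredMaximal

variable {g G : ℝ → ℝ≥0∞} {p : ℝ}

theorem setLAverage_le {x r : ℝ} (hp : p ∈ ball x r) :
    ⨍⁻ y in ball x r, g y ∂volume ≤ uncenteredMaximal g p :=
  le_iSup₂_of_le x r (le_iSup_of_le hp le_rfl)

theorem lt_iff_exists {c : ℝ≥0∞} :
    c < uncenteredMaximal g p ↔ ∃ x r, p ∈ ball x r ∧ c < ⨍⁻ y in ball x r, g y ∂volume := by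
  simp only [uncenteredMaximal, lt_iSup_iff, exists_prop]

theorem isOpen_setOf_lt (g : ℝ → ℝ≥0∞) (c : ℝ≥0∞) :
    IsOpen {p | c < uncenteredMaximal g p} := by
  refine isOpen_iff_forall_mem_open.2 fun p hp => ?_
  obtain ⟨x, r, hpB, hc⟩ := lt_iff_exists.1 hp
  exact ⟨ball x r, fun q hq => lt_iff_exists.2 ⟨x, r, hq, hc⟩, isOpen_ball, hpB⟩

theorem measurable (g : ℝ → ℝ≥0∞) : Measurable (uncenteredMaximal g) :=
  measurable_of_Ioi fun c => (isOpen_setOf_lt g c).measurableSet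

theorem le_add_of_forall_le_add {c : ℝ≥0∞} (h : ∀ y, g y ≤ G y + c) :
    uncenteredMaximal g p ≤ uncenteredMaximal G p + c := by
  refine iSup₂_le fun x r => iSup_le fun hp => ?_
  have hB0 : volume (ball x r) ≠ 0 := (measure_ball_pos volume x (pos_of_mem_ball hp)).ne'
  calc ⨍⁻ y in ball x r, g y ∂volume ≤ ⨍⁻ y in ball x r, (G y + c) ∂volume := by
        rw [setLAverage_eq, setLAverage_eq]
        gcongr
        exact h _
    _ = ⨍⁻ y in ball x r, G y ∂volume + c := by
        rw [setLAverage_eq, setLAverage_eq, lintegral_add_right _ measurable_const,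
          setLIntegral_const, ENNReal.add_div,
          ENNReal.mul_div_cancel_right hB0 measure_ball_lt_top.ne]
    _ ≤ uncenteredMaximal G p + c := by
        gcongr
        exact setLAverage_le hp

theorem le_of_forall_le {c : ℝ≥0∞} (h : ∀ y, g y ≤ c) : uncenteredMaximal g p ≤ c := by
  have hzero : uncenteredMaximal 0 p = 0 := by simp [uncenteredMaximal]
  simpa [hzero] using le_add_of_forall_le_add (G := 0) (p := p) (by simpa using h)

theorem mul_volume_setOf_lt_le (g : ℝ → ℝ≥0∞) (c : ℝ≥0∞) :
    c * volume {p | c < uncenteredMaximal g p} ≤ 4 * ∫⁻ y, g y := by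
  rcases eq_or_ne c 0 with rfl | hc0
  · simp
  rcases eq_or_ne (∫⁻ y, g y) ∞ with hint | hint
  · simp [hint]
  set S : Set (ℝ × ℝ) := {q | c * volume (ball q.1 q.2) < ∫⁻ y in ball q.1 q.2, g y}
  have hsub : {p | c < uncenteredMaximal g p} ⊆ ⋃ q ∈ S, ball q.1 q.2 := by
    intro p hp
    obtain ⟨x, r, hpB, hlt⟩ := lt_iff_exists.1 hp
    have hB0 : volume (ball x r) ≠ 0 := (measure_ball_pos volume x (pos_of_mem_ball hpB)).ne'
    rw [setLAverage_eq, ENNReal.lt_div_iff_mul_lt (Or.inl hB0) (Or.inl measure_ball_lt_top.ne)]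
      at hlt
    exact mem_biUnion (x := (x, r)) hlt hpB
  -- radii are bounded: a ball on which `g` averages more than `c` has measure below `∫⁻ g / c`
  have hbdd : ∀ q ∈ S, q.2 ≤ ((∫⁻ y, g y) / c).toReal := by
    intro q hq
    rcases le_or_gt q.2 0 with hr | hr
    · exact hr.trans ENNReal.toReal_nonneg
    have hlt : volume (ball q.1 q.2) < (∫⁻ y, g y) / c := by
      rw [ENNReal.lt_div_iff_mul_lt (Or.inl hc0) (Or.inr (measure_ball_pos volume q.1 hr).ne'),
        mul_comm]
      exact hq.trans_le (setLIntegral_le_lintegral _ _)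
    rw [Real.volume_ball, ENNReal.ofReal_lt_iff_lt_toReal (by positivity)
      (ENNReal.div_ne_top hint hc0)] at hlt
    linarith
  calc c * volume {p | c < uncenteredMaximal g p}
      ≤ c * volume (⋃ q ∈ S, ball q.1 q.2) := by gcongr
    _ ≤ 4 * ∫⁻ y, g y := mul_volume_biUnion_ball_le hbdd fun q hq => hq

theorem mul_volume_setOf_lt_le_setLIntegral (hg : Measurable g) {c : ℝ≥0∞} (hc : c ≠ ∞) :
    c * volume {p | c < uncenteredMaximal g p} ≤ 8 * ∫⁻ y in {y | c < 2 * g y}, g y := by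
  have hmeas : MeasurableSet {y | c < 2 * g y} := measurableSet_lt measurable_const (hg.const_mul 2)
  set G := {y | c < 2 * g y}.indicator g
  -- below the truncation level, `g` adds at most `c / 2` to every average
  have hsplit (y : ℝ) : g y ≤ G y + c / 2 := by
    by_cases hy : y ∈ {y | c < 2 * g y}
    · simp only [G, indicator_of_mem hy]
      exact le_self_add
    · simp only [G, indicator_of_notMem hy, zero_add]
      rw [ENNReal.le_div_iff_mul_le (by simp) (by simp), mul_comm]
      exact not_lt.1 hy
  have hsub : {p | c < uncenteredMaximal g p} ⊆ {p | c / 2 < uncenteredMaximal G p} := by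
    intro p hp
    have hlt : c / 2 + c / 2 < uncenteredMaximal G p + c / 2 := by
      rw [ENNReal.add_halves]
      exact hp.trans_le (le_add_of_forall_le_add hsplit)
    exact (ENNReal.add_lt_add_iff_right (ENNReal.div_ne_top hc two_ne_zero)).1 hlt
  calc c * volume {p | c < uncenteredMaximal g p}
      ≤ 2 * (c / 2 * volume {p | c / 2 < uncenteredMaximal G p}) := by
        rw [← mul_assoc, ENNReal.mul_div_cancel two_ne_zero ENNReal.ofNat_ne_top]
        gcongr
    _ ≤ 2 * (4 * ∫⁻ y, G y) := by
        gcongr 2 * ?_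
        exact mul_volume_setOf_lt_le _ _
    _ = 8 * ∫⁻ y in {y | c < 2 * g y}, g y := by
        rw [lintegral_indicator hmeas, ← mul_assoc]
        norm_num

theorem lintegral_sq_le (hg : Measurable g) (hfin : ∀ p, uncenteredMaximal g p ≠ ∞) :
    ∫⁻ p, uncenteredMaximal g p ^ 2 ≤ 32 * ∫⁻ p, g p ^ 2 := by
  set M := uncenteredMaximal g
  have hlevel (t : ℝ) (ht : t ∈ Ioi 0) :
      volume {p | t < (M p).toReal} * ENNReal.ofReal (t ^ ((2 : ℝ) - 1))
        ≤ 8 * ∫⁻ y in {y | ENNReal.ofReal t < 2 * g y}, g y := by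
    have hset : {p | t < (M p).toReal} = {p | ENNReal.ofReal t < M p} := by
      ext p
      exact (ENNReal.ofReal_lt_iff_lt_toReal (le_of_lt ht) (hfin p)).symm
    rw [hset, show t ^ ((2 : ℝ) - 1) = t by norm_num, mul_comm]
    exact mul_volume_setOf_lt_le_setLIntegral hg ENNReal.ofReal_ne_top
  calc ∫⁻ p, M p ^ 2 = ∫⁻ p, ENNReal.ofReal ((M p).toReal ^ (2 : ℝ)) := by
        congr with p
        rw [Real.rpow_two, ENNReal.ofReal_pow ENNReal.toReal_nonneg, ENNReal.ofReal_toReal (hfin p)]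
    _ = 2 * ∫⁻ t in Ioi 0,
          volume {p | t < (M p).toReal} * ENNReal.ofReal (t ^ ((2 : ℝ) - 1)) := by
        rw [lintegral_rpow_eq_lintegral_meas_lt_mul _ (ae_of_all _ fun _ => ENNReal.toReal_nonneg)
          (uncenteredMaximal.measurable g).ennreal_toReal.aemeasurable two_pos,
          ENNReal.ofReal_ofNat]
    _ ≤ 2 * ∫⁻ t in Ioi 0, 8 * ∫⁻ y in {y | ENNReal.ofReal t < 2 * g y}, g y := by
        gcongr 2 * ?_
        exact setLIntegral_mono' measurableSet_Ioi hlevel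
    _ = 16 * ∫⁻ y, 2 * g y * g y := by
        rw [lintegral_const_mul' _ _ ENNReal.ofNat_ne_top,
          lintegral_Ioi_setLIntegral_ofReal_lt (hg.const_mul 2) hg, ← mul_assoc]
        norm_num
    _ = 32 * ∫⁻ y, g y ^ 2 := by
        simp_rw [mul_assoc, ← sq]
        rw [lintegral_const_mul' _ _ ENNReal.ofNat_ne_top, ← mul_assoc]
        norm_num

theorem setLIntegral_Icc_div_le {a b : ℝ} (hab : a < b) (hp : p ∈ Icc a b) :
    (∫⁻ y in Icc a b, g y) / ENNReal.ofReal (b - a) ≤ 2 * uncenteredMaximal g p := by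
  have hIcc : Icc a b ⊆ ball ((a + b) / 2) (b - a) := by
    rw [Real.ball_eq_Ioo]
    exact Icc_subset_Ioo (by linarith) (by linarith)
  calc (∫⁻ y in Icc a b, g y) / ENNReal.ofReal (b - a)
      ≤ (∫⁻ y in ball ((a + b) / 2) (b - a), g y) / ENNReal.ofReal (b - a) := by
        gcongr
    _ = 2 * ⨍⁻ y in ball ((a + b) / 2) (b - a), g y ∂volume := by
        rw [setLAverage_eq, Real.volume_ball, ENNReal.ofReal_mul zero_le_two, ENNReal.ofReal_ofNat,
          ← mul_div_assoc, ENNReal.mul_div_mul_left _ _ two_ne_zero ENNReal.ofNat_ne_top]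
    _ ≤ 2 * uncenteredMaximal g p := by
        gcongr
        exact setLAverage_le (hIcc hp)

end uncenteredMaximal

theorem AbsolutelyContinuousOnInterval.abs_sub_le_setIntegral_abs_deriv {f : ℝ → ℝ}
    {a b u v : ℝ} (hf : AbsolutelyContinuousOnInterval f a b) (hu : u ∈ Icc a b)
    (hv : v ∈ Icc a b) : |f u - f v| ≤ ∫ x in Icc a b, |deriv f x| := by
  wlog huv : u ≤ v generalizing u v
  · rw [abs_sub_comm]
    exact this hv hu (le_of_not_ge huv)
  have hint : IntegrableOn (fun x => |deriv f x|) (Icc a b) :=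
    ((intervalIntegrable_iff_integrableOn_Icc_of_le (hu.1.trans hu.2)).1
      hf.intervalIntegrable_deriv).abs
  have hsub : uIcc u v ⊆ uIcc a b :=
    uIcc_subset_uIcc (mem_uIcc_of_le hu.1 hu.2) (mem_uIcc_of_le hv.1 hv.2)
  rw [abs_sub_comm, ← (hf.mono hsub).integral_deriv_eq_sub]
  calc |∫ x in u..v, deriv f x| ≤ ∫ x in u..v, |deriv f x| :=
        intervalIntegral.abs_integral_le_integral_abs huv
    _ = ∫ x in Ioc u v, |deriv f x| := intervalIntegral.integral_of_le huv
    _ ≤ ∫ x in Icc a b, |deriv f x| :=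
        setIntegral_mono_set hint (ae_of_all _ fun _ => abs_nonneg _)
          (Ioc_subset_Icc_self.trans (Icc_subset_Icc hu.1 hv.2)).eventuallyLE

theorem abs_sub_meanOn_le {f : ℝ → ℝ} {a b u I : ℝ} (hab : a < b)
    (hf : IntegrableOn f (Icc a b)) (hosc : ∀ v ∈ Icc a b, |f u - f v| ≤ I) :
    |f u - meanOn f a b| ≤ I := by
  have hvol : volume.real (Icc a b) = b - a := by simp [hab.le]
  have hint : ∫ v in Icc a b, (f u - f v) = (b - a) * f u - ∫ v in Icc a b, f v := by
    rw [integral_sub (integrable_const _) hf, setIntegral_const, hvol, smul_eq_mul]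
  have hle := norm_setIntegral_le_of_norm_le_const (f := fun v => f u - f v) (μ := volume)
    measure_Icc_lt_top (by simpa only [Real.norm_eq_abs] using hosc)
  rw [hint, hvol, Real.norm_eq_abs] at hle
  have hba : 0 < b - a := sub_pos.2 hab
  rw [meanOn, show f u - 1 / (b - a) * ∫ v in Icc a b, f v
      = (1 / (b - a)) * ((b - a) * f u - ∫ v in Icc a b, f v) by field_simp, abs_mul,
    abs_of_pos (one_div_pos.2 hba)]
  calc 1 / (b - a) * |(b - a) * f u - ∫ v in Icc a b, f v| ≤ 1 / (b - a) * (I * (b - a)) := by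
        gcongr
    _ = I := by field_simp

theorem meanOn_oscillation_le {f : ℝ → ℝ} {a b I : ℝ} (hab : a < b)
    (hf : IntegrableOn f (Icc a b)) (hosc : ∀ u ∈ Icc a b, ∀ v ∈ Icc a b, |f u - f v| ≤ I) :
    (1 / (b - a)) * ∫ u in Icc a b, |f u - meanOn f a b| ≤ I := by
  have hle := norm_setIntegral_le_of_norm_le_const (f := fun u => |f u - meanOn f a b|)
    (μ := volume) measure_Icc_lt_top fun u hu => by
      simpa only [Real.norm_eq_abs, abs_abs] using abs_sub_meanOn_le hab hf (hosc u hu)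
  have hvol : volume.real (Icc a b) = b - a := by simp [hab.le]
  rw [hvol, Real.norm_eq_abs] at hle
  have hba : 0 < b - a := sub_pos.2 hab
  calc 1 / (b - a) * ∫ u in Icc a b, |f u - meanOn f a b| ≤ 1 / (b - a) * (I * (b - a)) := by
        gcongr
        exact (le_abs_self _).trans hle
    _ = I := by field_simp

theorem maxFnN_nonneg (f : ℝ → ℝ) (p : ℝ) : 0 ≤ maxFnN f p :=
  Real.iSup_nonneg fun ⟨⟨a, b⟩, hab, _, _⟩ => by
    have : 0 ≤ b - a := sub_nonneg.2 hab
    positivity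

theorem LipschitzWith.uncenteredMaximal_enorm_deriv_ne_top {f : ℝ → ℝ} {K : ℝ≥0}
    (hf : LipschitzWith K f) (p : ℝ) : uncenteredMaximal (fun x => ‖deriv f x‖ₑ) p ≠ ∞ :=
  ne_top_of_le_ne_top ENNReal.coe_ne_top <|
    uncenteredMaximal.le_of_forall_le fun _ => enorm_le_coe.2 (norm_deriv_le_of_lipschitz hf)

theorem maxFnN_le_two_mul_uncenteredMaximal {f : ℝ → ℝ} {K : ℝ≥0} (hf : LipschitzWith K f)
    (p : ℝ) : maxFnN f p ≤ 2 * (uncenteredMaximal (fun x => ‖deriv f x‖ₑ) p).toReal := by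
  set D : ℝ → ℝ≥0∞ := fun x => ‖deriv f x‖ₑ
  have : Nonempty {q : ℝ × ℝ // q.1 ≤ q.2 ∧ q.2 - q.1 ≤ 4 ∧ p ∈ Icc q.1 q.2} :=
    ⟨⟨(p, p), le_rfl, by norm_num, left_mem_Icc.2 le_rfl⟩⟩
  refine ciSup_le ?_
  rintro ⟨⟨a, b⟩, hab, -, hp⟩
  dsimp only at hab hp ⊢
  rcases hab.eq_or_lt with rfl | hab
  · simp
  have hac : AbsolutelyContinuousOnInterval f a b :=
    (hf.lipschitzOnWith (s := uIcc a b)).absolutelyContinuousOnInterval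
  have hderiv : IntegrableOn (deriv f) (Icc a b) :=
    (intervalIntegrable_iff_integrableOn_Icc_of_le hab.le).1 hac.intervalIntegrable_deriv
  set I := ∫ x in Icc a b, |deriv f x|
  have hI : ENNReal.ofReal I = ∫⁻ x in Icc a b, D x := by
    simp only [I, D, ← Real.norm_eq_abs, ofReal_integral_norm_eq_lintegral_enorm hderiv]
  have hosc := meanOn_oscillation_le hab hf.continuous.integrableOn_Icc
    fun _ hu _ hv => hac.abs_sub_le_setIntegral_abs_deriv hu hv
  have hmax : ENNReal.ofReal (I / (b - a)) ≤ 2 * uncenteredMaximal D p := by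
    rw [ENNReal.ofReal_div_of_pos (sub_pos.2 hab), hI]
    exact uncenteredMaximal.setLIntegral_Icc_div_le hab hp
  have hfin : 2 * uncenteredMaximal D p ≠ ∞ :=
    ENNReal.mul_ne_top ENNReal.ofNat_ne_top (hf.uncenteredMaximal_enorm_deriv_ne_top p)
  calc 1 / (b - a) * (∫ u in Icc a b, |f u - meanOn f a b|) / (b - a) ≤ I / (b - a) := by
        gcongr
    _ ≤ 2 * (uncenteredMaximal D p).toReal := by
        rw [← ENNReal.toReal_ofNat, ← ENNReal.toReal_mul]
        exact (ENNReal.ofReal_le_iff_le_toReal hfin).1 hmax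

theorem ofReal_maxFnN_sq_le {f : ℝ → ℝ} {K : ℝ≥0} (hf : LipschitzWith K f) (p : ℝ) :
    ENNReal.ofReal (maxFnN f p ^ 2) ≤ 4 * uncenteredMaximal (fun x => ‖deriv f x‖ₑ) p ^ 2 := by
  calc ENNReal.ofReal (maxFnN f p ^ 2)
      ≤ ENNReal.ofReal ((2 * (uncenteredMaximal (fun x => ‖deriv f x‖ₑ) p).toReal) ^ 2) := by
        gcongr
        · exact maxFnN_nonneg f p
        · exact maxFnN_le_two_mul_uncenteredMaximal hf p
    _ = 4 * uncenteredMaximal (fun x => ‖deriv f x‖ₑ) p ^ 2 := by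
        rw [mul_pow, ENNReal.ofReal_mul (by norm_num), ENNReal.ofReal_pow ENNReal.toReal_nonneg,
          ENNReal.ofReal_toReal (hf.uncenteredMaximal_enorm_deriv_ne_top p)]
        norm_num

/-- An `L²` bound for the maximal function `N(f)` of a Lipschitz function `f : ℝ → ℝ`:
`∫ N(f)² ≤ C ∫ |f′|²` for an absolute constant `C`. -/
theorem statement13 :
    ∃ C : ℝ, 0 < C ∧
      ∀ f : ℝ → ℝ, (∃ K : ℝ≥0, LipschitzWith K f) →
        (∫⁻ p, ENNReal.ofReal (maxFnN f p ^ 2)) ≤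
          ENNReal.ofReal C * ∫⁻ p, ENNReal.ofReal (deriv f p ^ 2) := by
  refine ⟨128, by norm_num, ?_⟩
  rintro f ⟨K, hf⟩
  have hderiv (x : ℝ) : ENNReal.ofReal (deriv f x ^ 2) = ‖deriv f x‖ₑ ^ 2 := by
    rw [← sq_abs, ENNReal.ofReal_pow (abs_nonneg _), ← Real.enorm_eq_ofReal_abs]
  calc ∫⁻ p, ENNReal.ofReal (maxFnN f p ^ 2)
      ≤ ∫⁻ p, 4 * uncenteredMaximal (fun x => ‖deriv f x‖ₑ) p ^ 2 :=
        lintegral_mono (ofReal_maxFnN_sq_le hf)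
    _ = 4 * ∫⁻ p, uncenteredMaximal (fun x => ‖deriv f x‖ₑ) p ^ 2 :=
        lintegral_const_mul' _ _ ENNReal.ofNat_ne_top
    _ ≤ 4 * (32 * ∫⁻ p, ‖deriv f p‖ₑ ^ 2) := by
        gcongr
        exact uncenteredMaximal.lintegral_sq_le (measurable_deriv f).enorm
          hf.uncenteredMaximal_enorm_deriv_ne_top
    _ = ENNReal.ofReal 128 * ∫⁻ p, ENNReal.ofReal (deriv f p ^ 2) := by
        simp_rw [hderiv, ← mul_assoc]
        norm_num
end

section
/- Let ν : ℝ → ℝ be a C^∞ function supported in [−1,1] such that ∫_ℝ P(u)·ν(u) du = 0 for every affine function P : ℝ → ℝ. Then there exists a constant C(ν), depending only on ν, such that for every Lipschitz function A : ℝ → ℝ, every p ∈ ℝ and every t > 0, |(ν_t * A)(p)| ≤ C(ν) · t · γ(p,t), where γ(p,t) = inf_a (1/t) ∫_{p−t}^{p+t} |A(u) − a(u)|/t du, the infimum taken over all affine functions a : ℝ → ℝ. -/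
open MeasureTheory Metric Set
open scoped ENNReal NNReal

/-- The `L¹`-normalized dilate `g_t(p) = (1/t) g(p/t)`. -/
noncomputable def dilateL1 (g : ℝ → ℝ) (t : ℝ) (p : ℝ) : ℝ := (1 / t) * g (p / t)

/-- `γ(p,t) = inf_a (1/t) ∫_{p-t}^{p+t} |A(u) − a(u)|/t du`, the infimum over all affine
functions `a(u) = c·u + b`. -/
noncomputable def gammaA (A : ℝ → ℝ) (p t : ℝ) : ℝ :=
  ⨅ a : ℝ × ℝ, (1 / t) * ∫ u in Set.Icc (p - t) (p + t), |A u - (a.1 * u + a.2)| / t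

/-- If `ν` is smooth, supported in `[-1,1]`, and orthogonal to all affine functions, then
`|(ν_t * A)(p)| ≤ C(ν) · t · γ(p,t)` for every Lipschitz `A : ℝ → ℝ`, `p ∈ ℝ`, `t > 0`. -/
theorem statement17 (ν : ℝ → ℝ) (hν : ContDiff ℝ (⊤ : ℕ∞) ν)
    (hsupp : Function.support ν ⊆ Set.Icc (-1 : ℝ) 1)
    (hmom : ∀ c b : ℝ, ∫ u, (c * u + b) * ν u = 0) :
    ∃ C : ℝ, 0 < C ∧
      ∀ A : ℝ → ℝ, (∃ K : ℝ≥0, LipschitzWith K A) →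
        ∀ (p t : ℝ), 0 < t →
          |∫ u : ℝ, dilateL1 ν t (p - u) * A u| ≤ C * t * gammaA A p t := by
  have hνc : Continuous ν := hν.continuous
  have hνcs : HasCompactSupport ν :=
    HasCompactSupport.intro isCompact_Icc (fun x hx => by
      by_contra h; exact hx (hsupp h))
  obtain ⟨M, hM⟩ := hνcs.exists_bound_of_continuous hνc
  set C : ℝ := |M| + 1 with hCdef
  have hC : 0 < C := by positivity
  have hMC : ∀ x, |ν x| ≤ C := by
    intro x
    have h1 : |ν x| ≤ M := by simpa [Real.norm_eq_abs] using hM x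
    have h2 : M ≤ |M| := le_abs_self M
    simp only [hCdef]; linarith
  refine ⟨C, hC, ?_⟩
  rintro A ⟨K, hA⟩ p t ht
  have hAc : Continuous A := hA.continuous
  -- dilate vanishes outside the ball
  have hzero : ∀ u : ℝ, u ∉ Icc (p - t) (p + t) → dilateL1 ν t (p - u) = 0 := by
    intro u hu
    have hν0 : ν ((p - u) / t) = 0 := by
      by_contra h
      have hx := hsupp h
      simp only [Set.mem_Icc] at hx
      have h1 : -1 * t ≤ p - u := (le_div_iff₀ ht).mp hx.1
      have h2 : p - u ≤ t := (div_le_one ht).mp hx.2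
      exact hu (Set.mem_Icc.mpr ⟨by linarith, by linarith⟩)
    simp [dilateL1, hν0]
  have hf : Continuous (fun u : ℝ => dilateL1 ν t (p - u)) := by
    unfold dilateL1
    exact continuous_const.mul (hνc.comp ((continuous_const.sub continuous_id).div_const t))
  have hint : ∀ g : ℝ → ℝ, Continuous g →
      Integrable (fun u : ℝ => dilateL1 ν t (p - u) * g u) := by
    intro g hg
    refine (hf.mul hg).integrable_of_hasCompactSupport ?_
    exact HasCompactSupport.intro isCompact_Icc (fun u hu => by rw [Pi.mul_apply, hzero u hu, zero_mul])
  -- orthogonality to affine functions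
  have key0 : ∀ c b : ℝ, (∫ u : ℝ, dilateL1 ν t (p - u) * (c * u + b)) = 0 := by
    intro c b
    have h1 : (∫ u : ℝ, dilateL1 ν t (p - u) * (c * u + b))
        = ∫ w : ℝ, dilateL1 ν t w * (c * (p - w) + b) := by
      rw [← integral_sub_left_eq_self (fun w => dilateL1 ν t w * (c * (p - w) + b)) volume p]
      congr 1; funext u; rw [sub_sub_cancel]
    have h2 : (fun w : ℝ => dilateL1 ν t w * (c * (p - w) + b))
        = fun w : ℝ => (fun x : ℝ => (1 / t) * ν x * (c * (p - t * x) + b)) (w / t) := by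
      funext w
      simp only [dilateL1]
      rw [mul_div_cancel₀ _ ht.ne']
    have h3 : (fun x : ℝ => (1 / t) * ν x * (c * (p - t * x) + b))
        = fun x : ℝ => (1 / t) * (((-(c * t)) * x + (c * p + b)) * ν x) := by
      funext x; ring
    rw [h1, h2, Measure.integral_comp_div (fun x : ℝ => (1 / t) * ν x * (c * (p - t * x) + b)) t,
      h3, integral_const_mul, hmom, mul_zero, smul_zero]
  -- main bound, for each affine function
  have hbound : ∀ a : ℝ × ℝ, |∫ u : ℝ, dilateL1 ν t (p - u) * A u|
      ≤ (C * t) * ((1 / t) * ∫ u in Icc (p - t) (p + t), |A u - (a.1 * u + a.2)| / t) := by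
    rintro ⟨c, b⟩
    have hint2 : Integrable (fun u : ℝ => dilateL1 ν t (p - u) * (c * u + b)) volume :=
      hint (fun u => c * u + b) (by fun_prop)
    have heq : (∫ u : ℝ, dilateL1 ν t (p - u) * A u)
        = ∫ u : ℝ, dilateL1 ν t (p - u) * (A u - (c * u + b)) := by
      rw [show (fun u : ℝ => dilateL1 ν t (p - u) * (A u - (c * u + b)))
          = fun u => dilateL1 ν t (p - u) * A u - dilateL1 ν t (p - u) * (c * u + b)
          from funext fun u => by ring,
        integral_sub (hint A hAc) hint2, key0 c b, sub_zero]
    have hset : (∫ u : ℝ, dilateL1 ν t (p - u) * (A u - (c * u + b)))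
        = ∫ u in Icc (p - t) (p + t), dilateL1 ν t (p - u) * (A u - (c * u + b)) :=
      (setIntegral_eq_integral_of_forall_compl_eq_zero
        (fun u hu => by rw [hzero u hu, zero_mul])).symm
    have hRHS : (C * t) * ((1 / t) * ∫ u in Icc (p - t) (p + t), |A u - (c * u + b)| / t)
        = ∫ u in Icc (p - t) (p + t), (C / t) * |A u - (c * u + b)| := by
      rw [integral_div, integral_const_mul]
      field_simp
    rw [heq, hset, hRHS]
    have habs := norm_integral_le_integral_norm (μ := volume.restrict (Icc (p - t) (p + t)))
      (fun u => dilateL1 ν t (p - u) * (A u - (c * u + b)))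
    simp only [Real.norm_eq_abs] at habs
    refine habs.trans ?_
    have hi1 : IntegrableOn (fun u : ℝ => |dilateL1 ν t (p - u) * (A u - (c * u + b))|)
        (Icc (p - t) (p + t)) :=
      ((hf.mul (hAc.sub ((continuous_const.mul continuous_id).add continuous_const))).abs).integrableOn_Icc
    have hi2 : IntegrableOn (fun u : ℝ => (C / t) * |A u - (c * u + b)|)
        (Icc (p - t) (p + t)) :=
      (continuous_const.mul ((hAc.sub ((continuous_const.mul continuous_id).add continuous_const)).abs)).integrableOn_Icc
    refine setIntegral_mono_on hi1 hi2 measurableSet_Icc ?_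
    intro u _
    rw [abs_mul]
    have hd : |dilateL1 ν t (p - u)| ≤ C / t := by
      simp only [dilateL1, abs_mul, abs_div]
      rw [abs_of_pos ht, abs_one]
      rw [div_mul_eq_mul_div, one_mul, div_le_div_iff₀ ht ht]
      have := hMC ((p - u) / t)
      nlinarith [abs_nonneg (ν ((p - u) / t))]
    exact mul_le_mul_of_nonneg_right hd (abs_nonneg _)
  -- pass to the infimum
  have hCt : (0 : ℝ) < C * t := by positivity
  have hdiv : ∀ a : ℝ × ℝ, |∫ u : ℝ, dilateL1 ν t (p - u) * A u| / (C * t)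
      ≤ (1 / t) * ∫ u in Icc (p - t) (p + t), |A u - (a.1 * u + a.2)| / t := by
    intro a
    rw [div_le_iff₀ hCt, mul_comm]
    exact hbound a
  have hinf : |∫ u : ℝ, dilateL1 ν t (p - u) * A u| / (C * t) ≤ gammaA A p t :=
    le_ciInf hdiv
  calc |∫ u : ℝ, dilateL1 ν t (p - u) * A u|
      = (|∫ u : ℝ, dilateL1 ν t (p - u) * A u| / (C * t)) * (C * t) := by
        field_simp
    _ ≤ gammaA A p t * (C * t) := mul_le_mul_of_nonneg_right hinf hCt.le
    _ = C * t * gammaA A p t := by ring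
end
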